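/- For graphs H₁, …, H_t and a graph F on n vertices that contains no H_i as a subgraph for any i, the join K_{t−1} ∇ F contains no subgraph isomorphic to the disjoint union H₁ ∪ ⋯ ∪ H_t. -/

import Mathlib

open SimpleGraph

/-- The join `G ∇ H` of two graphs: disjoint union plus all edges between the two parts. -/
def graphJoin {α β : Type*} (G : SimpleGraph α) (H : SimpleGraph β) :
    SimpleGraph (α ⊕ β) where
  Adj x y :=
    match x, y with
    | Sum.inl a, Sum.inl a' => G.Adj a a'
    | Sum.inr b, Sum.inr b' => H.Adj b b'
    | Sum.inl _, Sum.inr _ => True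
    | Sum.inr _, Sum.inl _ => True
  symm := by constructor; rintro (a | b) (a' | b') h <;> simp_all <;> exact h.symm
  loopless := by constructor; rintro (a | b) h <;> simp_all

/-- `H` is contained in `G` as a subgraph: there is an injective graph homomorphism. -/
def Contains {α β : Type*} (H : SimpleGraph α) (G : SimpleGraph β) : Prop :=
  ∃ f : α → β, Function.Injective f ∧ ∀ ⦃a b⦄, H.Adj a b → G.Adj (f a) (f b)

theorem exists_apply_eq_inl_of_not_contains {β γ W : Type*} {G : SimpleGraph β}
    {F : SimpleGraph γ} {H : SimpleGraph W} (hfree : ¬Contains H F) {f : W → β ⊕ γ}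
    (hinj : Function.Injective f) (hadj : ∀ a b, H.Adj a b → (graphJoin G F).Adj (f a) (f b)) :
    ∃ a k, f a = Sum.inl k := by
  by_contra! hright
  have hrange : ∀ a, ∃ c, f a = Sum.inr c := fun a => by
    cases hfa : f a with
    | inl k => exact absurd hfa (hright a k)
    | inr c => exact ⟨c, rfl⟩
  choose g hg using hrange
  refine hfree ⟨g, fun a b hab => hinj ?_, fun a b hab => ?_⟩
  · rw [hg a, hg b, hab]
  · have hab' := hadj a b hab
    rwa [hg a, hg b] at hab'

theorem join_complete_free_of_union_general {α : Type*} (t : ℕ) (ht : 1 ≤ t)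
    (W : Fin t → Type*) (H : ∀ i, SimpleGraph (W i))
    (F : SimpleGraph α) (hfree : ∀ i, ¬Contains (H i) F) :
    ¬∃ f : ∀ i, W i → (Fin (t - 1) ⊕ α),
      (∀ i, Function.Injective (f i)) ∧
      (∀ i, ∀ a b, (H i).Adj a b →
        (graphJoin (⊤ : SimpleGraph (Fin (t - 1))) F).Adj (f i a) (f i b)) ∧
      (∀ i j, i ≠ j → ∀ a b, f i a ≠ f j b) := by
  rintro ⟨f, hinj, hadj, hdisj⟩
  choose a k hk using fun i => exists_apply_eq_inl_of_not_contains (hfree i) (hinj i) (hadj i)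
  have hk_inj : Function.Injective k := fun i j hij => by
    by_contra hne
    exact hdisj i j hne (a i) (a j) (by rw [hk i, hk j, hij])
  have hcard : t ≤ t - 1 := Fin.le_of_injective k hk_inj
  omega

/-- For graphs `H₁, …, H_t` and a graph `F` that contains no `H_i` as a
subgraph for any `i`, the join `K_{t−1} ∇ F` contains no subgraph isomorphic to the
disjoint union `H₁ ∪ ⋯ ∪ H_t` (i.e. there are no pairwise vertex-disjoint copies of the
`H_i` in the join). -/
theorem join_complete_free_of_union {α : Type*} [Fintype α] (t : ℕ) (ht : 1 ≤ t)
    (W : Fin t → Type*) [∀ i, Fintype (W i)] (H : ∀ i, SimpleGraph (W i))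
    (F : SimpleGraph α) (hfree : ∀ i, ¬Contains (H i) F) :
    ¬∃ f : ∀ i, W i → (Fin (t - 1) ⊕ α),
      (∀ i, Function.Injective (f i)) ∧
      (∀ i, ∀ a b, (H i).Adj a b →
        (graphJoin (⊤ : SimpleGraph (Fin (t - 1))) F).Adj (f i a) (f i b)) ∧
      (∀ i j, i ≠ j → ∀ a b, f i a ≠ f j b) :=
  join_complete_free_of_union_general t ht W H F hfree
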